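/- arXiv:1904.07150 — 2 statements merged into one kernel-verified Lean document; each statement's English description precedes it below -/
import Mathlib

section
/- Let X be an n×p matrix whose columns are unit vectors: ‖X_{·i}‖₂ = 1 for all i. Define the mutual coherence mc(X) = max_{i≠j} |⟨X_{·i}, X_{·j}⟩| and φ̃(s) = inf { ‖Xθ‖₂ / ‖θ‖₂ : θ ≠ 0, |S_θ| ≤ s }. Then φ̃(s)² ≥ 1 − s · mc(X) for every s ≥ 1. -/
/-- For `X` with unit-norm columns, mutual coherence `mc(X)` and
`φ̃(s) = inf{‖Xθ‖₂/‖θ‖₂ : θ ≠ 0, |S_θ| ≤ s}`, one has `φ̃(s)² ≥ 1 − s·mc(X)`. -/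
theorem stmt13 (n p s : ℕ) (hp : 2 ≤ p) (hs : 1 ≤ s) (X : Matrix (Fin n) (Fin p) ℝ)
    (hunit : ∀ j, Real.sqrt (∑ i, (X i j)^2) = 1)
    (mc : ℝ) (hmc : mc = sSup { r : ℝ | ∃ i j : Fin p, i ≠ j ∧ r = |∑ k, X k i * X k j| })
    (phi : ℝ)
    (hphi : phi = sInf { r : ℝ | ∃ θ : Fin p → ℝ, θ ≠ 0 ∧ (Function.support θ).ncard ≤ s ∧
      r = Real.sqrt (∑ i, (X.mulVec θ i)^2) / Real.sqrt (∑ j, (θ j)^2) }) :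
    1 - s * mc ≤ phi ^ 2 := by
  -- Gram matrix
  have hGdiag : ∀ j, (∑ k, X k j * X k j) = 1 := by
    intro j
    have h := Real.sqrt_eq_one.mp (hunit j)
    simpa [sq] using h
  -- the coherence set is finite, hence bounded above
  have hfin : ({ r : ℝ | ∃ i j : Fin p, i ≠ j ∧ r = |∑ k, X k i * X k j| }).Finite := by
    apply Set.Finite.subset
      (Set.finite_range (fun ij : Fin p × Fin p => |∑ k, X k ij.1 * X k ij.2|))
    rintro r ⟨i, j, -, rfl⟩
    exact ⟨(i, j), rfl⟩
  have hmcbound : ∀ i j : Fin p, i ≠ j → |∑ k, X k i * X k j| ≤ mc := by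
    intro i j hij
    rw [hmc]
    exact le_csSup hfin.bddAbove ⟨i, j, hij, rfl⟩
  have hmc0 : 0 ≤ mc :=
    le_trans (abs_nonneg _)
      (hmcbound ⟨0, by omega⟩ ⟨1, by omega⟩ (by simp [Fin.ext_iff]))
  -- core inequality
  have key : ∀ θ : Fin p → ℝ, (Function.support θ).ncard ≤ s →
      (1 - s * mc) * (∑ j, (θ j)^2) ≤ ∑ i, (X.mulVec θ i)^2 := by
    intro θ hsupp
    have expand : (∑ i, (X.mulVec θ i)^2)
        = ∑ j, ∑ k, θ j * θ k * (∑ i, X i j * X i k) := by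
      simp only [Matrix.mulVec, dotProduct, sq, Finset.sum_mul_sum]
      rw [Finset.sum_comm]
      refine Finset.sum_congr rfl fun j _ => ?_
      rw [Finset.sum_comm]
      refine Finset.sum_congr rfl fun k _ => ?_
      rw [Finset.mul_sum]
      exact Finset.sum_congr rfl fun i _ => by ring
    -- ℓ¹–ℓ² bound on the support
    have hT : (∑ j, |θ j|)^2 ≤ (s : ℝ) * ∑ j, (θ j)^2 := by
      classical
      set T : Finset (Fin p) := Finset.univ.filter (fun j => θ j ≠ 0) with hTdef
      have hsuppT : Function.support θ = ↑T := by
        ext j; simp [hTdef, Function.mem_support]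
      have hcard : (T.card : ℝ) ≤ (s : ℝ) := by
        have := hsupp
        rw [hsuppT, Set.ncard_coe_finset] at this
        exact_mod_cast this
      have hsum1 : (∑ j, |θ j|) = ∑ j ∈ T, |θ j| := by
        symm
        apply Finset.sum_subset (Finset.subset_univ T)
        intro j _ hj
        simp [hTdef] at hj
        simp [hj]
      have hcs : (∑ j ∈ T, |θ j|)^2 ≤ (∑ j ∈ T, (1:ℝ)^2) * ∑ j ∈ T, |θ j|^2 := by
        simpa using Finset.sum_mul_sq_le_sq_mul_sq T (fun _ => (1:ℝ)) (fun j => |θ j|)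
      have hsq : ∀ j, |θ j|^2 = (θ j)^2 := fun j => sq_abs _
      calc (∑ j, |θ j|)^2 = (∑ j ∈ T, |θ j|)^2 := by rw [hsum1]
        _ ≤ (T.card : ℝ) * ∑ j ∈ T, (θ j)^2 := by
            simpa [hsq] using hcs
        _ ≤ (s : ℝ) * ∑ j, (θ j)^2 := by
            apply mul_le_mul hcard _ (Finset.sum_nonneg fun j _ => sq_nonneg _)
              (Nat.cast_nonneg s)
            exact Finset.sum_le_sum_of_subset_of_nonneg (Finset.subset_univ T)
              (fun j _ _ => sq_nonneg _)
    -- split diagonal and off-diagonal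
    have hsplit : (∑ j, ∑ k, θ j * θ k * (∑ i, X i j * X i k))
        = (∑ j, (θ j)^2) + ∑ j, ∑ k ∈ Finset.univ.erase j, θ j * θ k * (∑ i, X i j * X i k) := by
      rw [← Finset.sum_add_distrib]
      refine Finset.sum_congr rfl fun j _ => ?_
      rw [Finset.sum_eq_sum_sdiff_singleton_add (Finset.mem_univ j)]
      rw [hGdiag j]
      have : Finset.univ \ {j} = Finset.univ.erase j := by
        ext k; simp [Finset.mem_erase, Finset.mem_sdiff, eq_comm]
      rw [this]; ring
    have hoff : -(mc * ((s : ℝ) * ∑ j, (θ j)^2))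
        ≤ ∑ j, ∑ k ∈ Finset.univ.erase j, θ j * θ k * (∑ i, X i j * X i k) := by
      have habs : |∑ j, ∑ k ∈ Finset.univ.erase j, θ j * θ k * (∑ i, X i j * X i k)|
          ≤ mc * ((s : ℝ) * ∑ j, (θ j)^2) := by
        calc |∑ j, ∑ k ∈ Finset.univ.erase j, θ j * θ k * (∑ i, X i j * X i k)|
            ≤ ∑ j, |∑ k ∈ Finset.univ.erase j, θ j * θ k * (∑ i, X i j * X i k)| :=
              Finset.abs_sum_le_sum_abs _ _
          _ ≤ ∑ j, ∑ k ∈ Finset.univ.erase j, |θ j| * |θ k| * mc := by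
              refine Finset.sum_le_sum fun j _ => ?_
              refine le_trans (Finset.abs_sum_le_sum_abs _ _) (Finset.sum_le_sum fun k hk => ?_)
              rw [abs_mul, abs_mul]
              exact mul_le_mul_of_nonneg_left
                (hmcbound j k (fun h => (Finset.mem_erase.mp hk).1 h.symm))
                (mul_nonneg (abs_nonneg _) (abs_nonneg _))
          _ ≤ ∑ j, ∑ k, |θ j| * |θ k| * mc := by
              refine Finset.sum_le_sum fun j _ => ?_
              exact Finset.sum_le_sum_of_subset_of_nonneg (Finset.erase_subset _ _)
                (fun k _ _ => mul_nonneg (mul_nonneg (abs_nonneg _) (abs_nonneg _)) hmc0)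
          _ = mc * (∑ j, |θ j|)^2 := by
              rw [sq, Finset.sum_mul_sum]
              rw [Finset.mul_sum]
              refine Finset.sum_congr rfl fun j _ => ?_
              rw [Finset.mul_sum]
              exact Finset.sum_congr rfl fun k _ => by ring
          _ ≤ mc * ((s : ℝ) * ∑ j, (θ j)^2) := mul_le_mul_of_nonneg_left hT hmc0
      linarith [neg_abs_le (∑ j, ∑ k ∈ Finset.univ.erase j, θ j * θ k * (∑ i, X i j * X i k)),
        habs]
    rw [expand, hsplit]
    nlinarith [Finset.sum_nonneg (fun j (_ : j ∈ Finset.univ) => sq_nonneg (θ j))]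
  -- the set defining phi is nonempty
  set S : Set ℝ := { r : ℝ | ∃ θ : Fin p → ℝ, θ ≠ 0 ∧ (Function.support θ).ncard ≤ s ∧
      r = Real.sqrt (∑ i, (X.mulVec θ i)^2) / Real.sqrt (∑ j, (θ j)^2) } with hS
  have hSne : S.Nonempty := by
    classical
    refine ⟨_, (fun j => if j = (⟨0, by omega⟩ : Fin p) then (1:ℝ) else 0), ?_, ?_, rfl⟩
    · intro h
      have := congrFun h ⟨0, by omega⟩
      simp at this
    · have : Function.support (fun j => if j = (⟨0, by omega⟩ : Fin p) then (1:ℝ) else 0)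
          = {(⟨0, by omega⟩ : Fin p)} := by
        ext j; simp [Function.mem_support]
      rw [this, Set.ncard_singleton]
      exact hs
  by_cases h1 : 1 - (s : ℝ) * mc ≤ 0
  · exact le_trans h1 (sq_nonneg phi)
  push_neg at h1
  set c : ℝ := Real.sqrt (1 - s * mc) with hc
  have hc2 : c^2 = 1 - s * mc := Real.sq_sqrt h1.le
  have hphic : c ≤ phi := by
    rw [hphi]
    apply le_csInf hSne
    rintro r ⟨θ, hθ, hsupp, rfl⟩
    have hB : 0 < ∑ j, (θ j)^2 := by
      obtain ⟨j, hj⟩ := Function.ne_iff.mp hθ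
      exact Finset.sum_pos' (fun k _ => sq_nonneg _)
        ⟨j, Finset.mem_univ j, sq_pos_of_ne_zero hj⟩
    have hA : (1 - s * mc) * (∑ j, (θ j)^2) ≤ ∑ i, (X.mulVec θ i)^2 := key θ hsupp
    rw [← Real.sqrt_div (Finset.sum_nonneg fun i (_ : i ∈ Finset.univ) => sq_nonneg (X.mulVec θ i))]
    apply Real.sqrt_le_sqrt
    rw [le_div_iff₀ hB]
    exact hA
  have : c^2 ≤ phi^2 :=
    pow_le_pow_left₀ (Real.sqrt_nonneg _) hphic 2
  linarith [hc2 ▸ this]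
end

section
/- Let A be a d×d symmetric positive definite matrix with smallest eigenvalue Λ_min(A) ≥ m > 0 and A_{ii} ≤ M for all i. Define the diagonal matrix D by D_{ii} = 1/A_{ii} and Σ = A^{-1}. Then det(Σ)·det(D^{-1}) ≤ (M/m)^d, and consequently KL( N(μ, D) ‖ N(μ, Σ) ) ≤ (d/2) log(M/m) for any μ ∈ ℝ^d. -/
open MeasureTheory Matrix Real

/-- Kullback-Leibler divergence `KL(Q‖P) = ∫ log (dQ/dP) dQ`. -/
noncomputable def klDiv {α : Type*} [MeasurableSpace α] (Q P : Measure α) : ℝ :=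
  ∫ x, Real.log ((Q.rnDeriv P x).toReal) ∂Q

/-- Density of the `N(μ, V)` distribution on `ℝ^d`. -/
noncomputable def gaussDensity {d : ℕ} (μ : Fin d → ℝ) (V : Matrix (Fin d) (Fin d) ℝ)
    (x : Fin d → ℝ) : ℝ :=
  (Real.sqrt ((2 * π) ^ d * V.det))⁻¹ *
    Real.exp (-(1 / 2) * ((x - μ) ⬝ᵥ V⁻¹.mulVec (x - μ)))

/-- The multivariate Gaussian measure `N(μ, V)` on `ℝ^d`. -/
noncomputable def gaussMeasure {d : ℕ} (μ : Fin d → ℝ) (V : Matrix (Fin d) (Fin d) ℝ) :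
    Measure (Fin d → ℝ) :=
  volume.withDensity fun x => ENNReal.ofReal (gaussDensity μ V x)

/-! Both densities are explicit, so `log (dQ/dP)` is a constant plus a difference of quadratic
forms in `x - μ`. Under the diagonal Gaussian `N(μ, D)` the coordinates are independent, so
`E[(x i - μ i) * (x j - μ j)] = D i j` and `E[(x - μ)ᵀ B (x - μ)] = Tr (B D)`; this gives
`KL = (log (det Σ / det D) - d + Tr (Σ⁻¹ D)) / 2`, and `Tr (A D) = d` for `D = diag (1 / A i i)`.
Finally `det A ≥ m ^ d` (product of the eigenvalues) and `∏ i, A i i ≤ M ^ d`, and `log` is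
monotone. -/

open ProbabilityTheory NNReal

lemma integrable_sub_pow_mul_gaussianPDFReal (c : ℝ) (v : ℝ≥0) (n : ℕ) :
    Integrable fun t => (t - c) ^ n * gaussianPDFReal c v t := by
  rcases eq_or_ne v 0 with rfl | hv
  · simp
  have hmoment : Integrable (fun t => ‖t - c‖ ^ n) (gaussianReal c v) :=
    ((memLp_id_gaussianReal n).sub (memLp_const c)).integrable_norm_pow'
  rw [gaussianReal_of_var_ne_zero c hv, integrable_withDensity_iff_integrable_smul'
    (measurable_gaussianPDF c v) (ae_of_all _ fun _ => gaussianPDF_lt_top)] at hmoment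
  refine hmoment.mono' (by fun_prop) (ae_of_all _ fun t => ?_)
  simp [toReal_gaussianPDF, abs_of_nonneg (gaussianPDFReal_nonneg c v t), mul_comm]

lemma integral_sub_pow_mul_gaussianPDFReal (c : ℝ) {v : ℝ≥0} (hv : v ≠ 0) (n : ℕ) :
    ∫ t, (t - c) ^ n * gaussianPDFReal c v t = ∫ x, (x - c) ^ n ∂gaussianReal c v := by
  simp_rw [integral_gaussianReal_eq_integral_smul hv, smul_eq_mul, mul_comm]

lemma integral_sub_gaussianReal (c : ℝ) (v : ℝ≥0) : ∫ x, (x - c) ∂gaussianReal c v = 0 := by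
  have hint : Integrable (fun x => x) (gaussianReal c v) :=
    (memLp_id_gaussianReal 1).integrable le_rfl
  simp [integral_sub hint (integrable_const c), integral_id_gaussianReal]

lemma integral_sub_sq_gaussianReal (c : ℝ) (v : ℝ≥0) :
    ∫ x, (x - c) ^ 2 ∂gaussianReal c v = v := by
  simpa [integral_id_gaussianReal] using
    (variance_eq_integral (μ := gaussianReal c v) measurable_id.aemeasurable).symm.trans
      variance_id_gaussianReal

section DiagonalGaussian

variable {ι : Type*} [Fintype ι] [DecidableEq ι]

/-- Splits the integrand into one-dimensional central moments of order `0`, `1` and `2`. -/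
lemma sub_mul_sub_mul_prod_eq_prod_pow_mul (μ : ι → ℝ) (f : ι → ℝ → ℝ) (i j : ι) (x : ι → ℝ) :
    (x i - μ i) * (x j - μ j) * ∏ k, f k (x k) =
      ∏ k, (x k - μ k) ^ (Pi.single i 1 + Pi.single j 1 : ι → ℕ) k * f k (x k) := by
  simp only [Pi.add_apply, pow_add, Pi.single_apply, pow_ite, pow_one, pow_zero,
    Finset.prod_mul_distrib, Finset.prod_ite_eq', Finset.mem_univ, if_true]

lemma integrable_sub_mul_sub_mul_prod_gaussianPDFReal (μ : ι → ℝ) (v : ι → ℝ≥0) (i j : ι) :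
    Integrable fun x : ι → ℝ =>
      (x i - μ i) * (x j - μ j) * ∏ k, gaussianPDFReal (μ k) (v k) (x k) := by
  simp_rw [sub_mul_sub_mul_prod_eq_prod_pow_mul]
  exact Integrable.fintype_prod (f := fun k t => (t - μ k) ^ _ * gaussianPDFReal (μ k) (v k) t)
    fun k => integrable_sub_pow_mul_gaussianPDFReal _ _ _

lemma integral_sub_mul_sub_mul_prod_gaussianPDFReal (μ : ι → ℝ) {v : ι → ℝ≥0}
    (hv : ∀ i, v i ≠ 0) (i j : ι) :
    ∫ x : ι → ℝ, (x i - μ i) * (x j - μ j) * ∏ k, gaussianPDFReal (μ k) (v k) (x k) =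
      if i = j then (v i : ℝ) else 0 := by
  simp_rw [sub_mul_sub_mul_prod_eq_prod_pow_mul]
  rw [integral_fintype_prod_volume_eq_prod
    (f := fun k t => (t - μ k) ^ _ * gaussianPDFReal (μ k) (v k) t)]
  simp_rw [integral_sub_pow_mul_gaussianPDFReal _ (hv _)]
  split_ifs with hij
  · subst hij
    rw [Finset.prod_eq_single i (fun k _ hk => by simp [hk]) (by simp)]
    simpa using integral_sub_sq_gaussianReal (μ i) (v i)
  · refine Finset.prod_eq_zero (Finset.mem_univ i) ?_
    simpa [hij] using integral_sub_gaussianReal (μ i) (v i)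

end DiagonalGaussian

lemma klDiv_withDensity_ofReal {α : Type*} [MeasurableSpace α] (ν : Measure α) [SigmaFinite ν]
    {q p : α → ℝ} (hq : Measurable q) (hp : Measurable p) (hq0 : ∀ x, 0 ≤ q x)
    (hp0 : ∀ x, 0 < p x) :
    klDiv (ν.withDensity fun x => ENNReal.ofReal (q x))
        (ν.withDensity fun x => ENNReal.ofReal (p x)) = ∫ x, q x * log (q x / p x) ∂ν := by
  set P := ν.withDensity fun x => ENNReal.ofReal (p x)
  have hratio : Measurable fun x => ENNReal.ofReal (q x / p x) := (hq.div hp).ennreal_ofReal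
  have hQ : ν.withDensity (fun x => ENNReal.ofReal (q x)) =
      P.withDensity fun x => ENNReal.ofReal (q x / p x) := by
    rw [← withDensity_mul ν hp.ennreal_ofReal hratio]
    congr 1
    funext x
    rw [Pi.mul_apply, ← ENNReal.ofReal_mul (hp0 x).le, mul_div_cancel₀ _ (hp0 x).ne']
  have hrnDeriv : (ν.withDensity fun x => ENNReal.ofReal (q x)).rnDeriv P
      =ᵐ[ν.withDensity fun x => ENNReal.ofReal (q x)] fun x => ENNReal.ofReal (q x / p x) := by
    have : SigmaFinite P := SigmaFinite.withDensity_ofReal p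
    rw [hQ]
    exact (Measure.rnDeriv_withDensity P hratio).filter_mono
      (withDensity_absolutelyContinuous P _).ae_le
  rw [klDiv, integral_congr_ae (hrnDeriv.mono fun x hx => by rw [hx]),
    integral_withDensity_eq_integral_toReal_smul hq.ennreal_ofReal
      (ae_of_all _ fun _ => ENNReal.ofReal_lt_top)]
  simp_rw [ENNReal.toReal_ofReal (hq0 _), ENNReal.toReal_ofReal (div_nonneg (hq0 _) (hp0 _).le),
    smul_eq_mul]

section GaussDensity

variable {d : ℕ}

lemma measurable_gaussDensity (μ : Fin d → ℝ) (V : Matrix (Fin d) (Fin d) ℝ) :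
    Measurable (gaussDensity μ V) := by
  unfold gaussDensity
  fun_prop

lemma gaussDensity_pos (μ : Fin d → ℝ) {V : Matrix (Fin d) (Fin d) ℝ} (hV : 0 < V.det)
    (x : Fin d → ℝ) : 0 < gaussDensity μ V x := by
  unfold gaussDensity
  positivity

lemma log_gaussDensity (μ : Fin d → ℝ) {V : Matrix (Fin d) (Fin d) ℝ} (hV : 0 < V.det)
    (x : Fin d → ℝ) :
    log (gaussDensity μ V x) =
      -(1 / 2) * log ((2 * π) ^ d * V.det) - 1 / 2 * ((x - μ) ⬝ᵥ V⁻¹ *ᵥ (x - μ)) := by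
  have hc : 0 < (2 * π) ^ d * V.det := by positivity
  rw [gaussDensity, log_mul (by positivity) (exp_pos _).ne', log_inv, log_sqrt hc.le, log_exp]
  ring

lemma gaussDensity_diagonal (μ : Fin d → ℝ) {v : Fin d → ℝ} (hv : ∀ i, 0 < v i) :
    gaussDensity μ (diagonal v) = fun x => ∏ i, gaussianPDFReal (μ i) (v i).toNNReal (x i) := by
  funext x
  have hinv : (diagonal v)⁻¹ = diagonal fun i => (v i)⁻¹ := by
    refine inv_eq_left_inv ?_
    simp [diagonal_mul_diagonal, fun i => inv_mul_cancel₀ (hv i).ne']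
  have hquad : (x - μ) ⬝ᵥ (diagonal v)⁻¹ *ᵥ (x - μ) = ∑ i, (x i - μ i) ^ 2 / v i := by
    simp only [hinv, dotProduct, mulVec_diagonal, Pi.sub_apply]
    exact Finset.sum_congr rfl fun i _ => by ring
  have hnorm : (2 * π) ^ d * (diagonal v).det = ∏ i, 2 * π * v i := by
    simp [det_diagonal, Finset.prod_mul_distrib]
  rw [gaussDensity, hquad, hnorm]
  simp_rw [gaussianPDFReal, Real.coe_toNNReal _ (hv _).le]
  rw [sqrt_prod _ fun i _ => by have := hv i; positivity, ← Finset.prod_inv_distrib,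
    Finset.mul_sum, exp_sum, ← Finset.prod_mul_distrib]
  refine Finset.prod_congr rfl fun i _ => congrArg _ (congrArg exp ?_)
  ring

lemma integrable_gaussDensity_diagonal (μ : Fin d → ℝ) {v : Fin d → ℝ} (hv : ∀ i, 0 < v i) :
    Integrable (gaussDensity μ (diagonal v)) := by
  rw [gaussDensity_diagonal μ hv]
  exact Integrable.fintype_prod (f := fun i => gaussianPDFReal (μ i) (v i).toNNReal)
    fun i => integrable_gaussianPDFReal _ _

lemma integral_gaussDensity_diagonal (μ : Fin d → ℝ) {v : Fin d → ℝ} (hv : ∀ i, 0 < v i) :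
    ∫ x, gaussDensity μ (diagonal v) x = 1 := by
  rw [gaussDensity_diagonal μ hv, integral_fintype_prod_volume_eq_prod
    (f := fun i => gaussianPDFReal (μ i) (v i).toNNReal)]
  exact Finset.prod_eq_one fun i _ =>
    integral_gaussianPDFReal_eq_one _ (Real.toNNReal_pos.2 (hv i)).ne'

lemma mul_dotProduct_mulVec_self_eq_sum {n R : Type*} [Fintype n] [CommSemiring R] (c : R)
    (y : n → R) (B : Matrix n n R) :
    c * (y ⬝ᵥ B *ᵥ y) = ∑ i, ∑ j, B i j * (y i * y j * c) := by
  simp only [dotProduct, mulVec, Finset.mul_sum]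
  exact Finset.sum_congr rfl fun i _ => Finset.sum_congr rfl fun j _ => by ring

lemma integrable_gaussDensity_diagonal_mul_quadForm (μ : Fin d → ℝ) {v : Fin d → ℝ}
    (hv : ∀ i, 0 < v i) (B : Matrix (Fin d) (Fin d) ℝ) :
    Integrable fun x => gaussDensity μ (diagonal v) x * ((x - μ) ⬝ᵥ B *ᵥ (x - μ)) := by
  simp_rw [mul_dotProduct_mulVec_self_eq_sum, gaussDensity_diagonal μ hv, Pi.sub_apply]
  exact integrable_finsetSum _ fun i _ => integrable_finsetSum _ fun j _ =>
    (integrable_sub_mul_sub_mul_prod_gaussianPDFReal μ _ i j).const_mul _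

lemma integral_gaussDensity_diagonal_mul_quadForm (μ : Fin d → ℝ) {v : Fin d → ℝ}
    (hv : ∀ i, 0 < v i) (B : Matrix (Fin d) (Fin d) ℝ) :
    ∫ x, gaussDensity μ (diagonal v) x * ((x - μ) ⬝ᵥ B *ᵥ (x - μ)) = (B * diagonal v).trace := by
  simp_rw [mul_dotProduct_mulVec_self_eq_sum, gaussDensity_diagonal μ hv, Pi.sub_apply]
  have hint : ∀ i j, Integrable fun x : Fin d → ℝ => B i j *
      ((x i - μ i) * (x j - μ j) * ∏ k, gaussianPDFReal (μ k) (v k).toNNReal (x k)) :=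
    fun i j => (integrable_sub_mul_sub_mul_prod_gaussianPDFReal μ _ i j).const_mul _
  rw [integral_finsetSum _ fun i _ => integrable_finsetSum _ fun j _ => hint i j]
  simp_rw [integral_finsetSum _ fun j _ => hint _ j, integral_const_mul,
    integral_sub_mul_sub_mul_prod_gaussianPDFReal μ (fun i => (Real.toNNReal_pos.2 (hv i)).ne'),
    Real.coe_toNNReal _ (hv _).le]
  simp [trace, mul_diagonal]

theorem klDiv_gaussMeasure_diagonal (μ : Fin d → ℝ) {v : Fin d → ℝ} (hv : ∀ i, 0 < v i)
    {W : Matrix (Fin d) (Fin d) ℝ} (hW : 0 < W.det) :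
    klDiv (gaussMeasure μ (diagonal v)) (gaussMeasure μ W) =
      1 / 2 * (log (W.det / (diagonal v).det) - d + (W⁻¹ * diagonal v).trace) := by
  have hV : 0 < (diagonal v).det := by
    rw [det_diagonal]
    exact Finset.prod_pos fun i _ => hv i
  have hintegrand : ∀ x, gaussDensity μ (diagonal v) x *
      log (gaussDensity μ (diagonal v) x / gaussDensity μ W x) =
        1 / 2 * log (W.det / (diagonal v).det) * gaussDensity μ (diagonal v) x +
          1 / 2 * (gaussDensity μ (diagonal v) x * ((x - μ) ⬝ᵥ W⁻¹ *ᵥ (x - μ))) -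
          1 / 2 * (gaussDensity μ (diagonal v) x * ((x - μ) ⬝ᵥ (diagonal v)⁻¹ *ᵥ (x - μ))) := by
    intro x
    rw [log_div (gaussDensity_pos μ hV x).ne' (gaussDensity_pos μ hW x).ne',
      log_gaussDensity μ hV, log_gaussDensity μ hW, log_mul (by positivity) hV.ne',
      log_mul (by positivity) hW.ne', log_div hW.ne' hV.ne']
    ring
  have hdim : ((diagonal v)⁻¹ * diagonal v).trace = d := by
    rw [nonsing_inv_mul _ (isUnit_iff_ne_zero.2 hV.ne'), trace_one, Fintype.card_fin]
  have hq := (integrable_gaussDensity_diagonal μ hv).const_mul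
    (1 / 2 * log (W.det / (diagonal v).det))
  have hqW := (integrable_gaussDensity_diagonal_mul_quadForm μ hv W⁻¹).const_mul (1 / 2)
  have hqV := (integrable_gaussDensity_diagonal_mul_quadForm μ hv (diagonal v)⁻¹).const_mul (1 / 2)
  rw [gaussMeasure, gaussMeasure, klDiv_withDensity_ofReal volume (measurable_gaussDensity μ _)
    (measurable_gaussDensity μ W) (fun x => (gaussDensity_pos μ hV x).le)
    (gaussDensity_pos μ hW)]
  simp_rw [hintegrand]
  rw [integral_sub (hq.fun_add hqW) hqV, integral_add hq hqW, integral_const_mul,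
    integral_const_mul, integral_const_mul, integral_gaussDensity_diagonal μ hv,
    integral_gaussDensity_diagonal_mul_quadForm μ hv,
    integral_gaussDensity_diagonal_mul_quadForm μ hv, hdim]
  ring

end GaussDensity

lemma Matrix.IsHermitian.pow_card_le_det {n : Type*} [Fintype n] [DecidableEq n]
    {A : Matrix n n ℝ} (hA : A.IsHermitian) {m : ℝ} (hm : 0 ≤ m) (h : ∀ i, m ≤ hA.eigenvalues i) :
    m ^ Fintype.card n ≤ A.det := by
  rw [hA.det_eq_prod_eigenvalues, ← Finset.card_univ, ← Finset.prod_const]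
  exact Finset.prod_le_prod (fun _ _ => hm) fun i _ => by simpa using h i

lemma Matrix.PosDef.det_inv_mul_prod_diag_le {n : Type*} [Fintype n] [DecidableEq n]
    {A : Matrix n n ℝ} (hA : A.PosDef) {m M : ℝ} (hm : 0 < m) (h : ∀ i, m ≤ hA.1.eigenvalues i)
    (hM : ∀ i, A i i ≤ M) :
    A⁻¹.det * ∏ i, A i i ≤ (M / m) ^ Fintype.card n := by
  have hdet : A⁻¹.det ≤ (m ^ Fintype.card n)⁻¹ := by
    rw [det_nonsing_inv, Ring.inverse_eq_inv]
    exact inv_anti₀ (pow_pos hm _) (hA.1.pow_card_le_det hm.le h)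
  have hprod : ∏ i, A i i ≤ M ^ Fintype.card n := by
    rw [← Finset.card_univ, ← Finset.prod_const]
    exact Finset.prod_le_prod (fun _ _ => hA.diag_pos.le) fun i _ => hM i
  calc A⁻¹.det * ∏ i, A i i ≤ (m ^ Fintype.card n)⁻¹ * M ^ Fintype.card n :=
        mul_le_mul hdet hprod (Finset.prod_nonneg fun _ _ => hA.diag_pos.le) (by positivity)
    _ = (M / m) ^ Fintype.card n := by rw [div_pow, inv_mul_eq_div]

lemma Matrix.PosDef.klDiv_gaussMeasure_diagonal_inv {d : ℕ} (μ : Fin d → ℝ)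
    {A : Matrix (Fin d) (Fin d) ℝ} (hA : A.PosDef) :
    klDiv (gaussMeasure μ (diagonal fun i => (A i i)⁻¹)) (gaussMeasure μ A⁻¹) =
      1 / 2 * log (A⁻¹.det * ∏ i, A i i) := by
  have htrace : (A * diagonal fun i => (A i i)⁻¹).trace = d := by
    simp [trace, mul_diagonal, mul_inv_cancel₀ hA.diag_pos.ne']
  rw [klDiv_gaussMeasure_diagonal μ (fun i => inv_pos.2 hA.diag_pos) hA.inv.det_pos,
    nonsing_inv_nonsing_inv A (isUnit_iff_ne_zero.2 hA.det_pos.ne'), htrace, det_diagonal,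
    Finset.prod_inv_distrib, div_inv_eq_mul]
  ring

/-- For `A` symmetric positive definite with `Λ_min(A) ≥ m > 0` and `A_{ii} ≤ M`,
with `D_{ii} = 1/A_{ii}` and `Σ = A⁻¹`: `det(Σ)·det(D⁻¹) ≤ (M/m)^d` and
`KL(N(μ,D)‖N(μ,Σ)) ≤ (d/2) log(M/m)`. -/
theorem stmt16 (d : ℕ) (μ : Fin d → ℝ) (A : Matrix (Fin d) (Fin d) ℝ) (hA : A.PosDef)
    (m M : ℝ) (hm : 0 < m)
    (heig : ∀ i, m ≤ hA.1.eigenvalues i) (hM : ∀ i, A i i ≤ M) :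
    A⁻¹.det * (Matrix.diagonal fun i => A i i).det ≤ (M / m) ^ d ∧
    klDiv (gaussMeasure μ (Matrix.diagonal fun i => (A i i)⁻¹)) (gaussMeasure μ A⁻¹)
      ≤ ((d : ℝ) / 2) * Real.log (M / m) := by
  have hdet := hA.det_inv_mul_prod_diag_le hm heig hM
  rw [Fintype.card_fin] at hdet
  refine ⟨by rwa [det_diagonal], ?_⟩
  have hpos : 0 < A⁻¹.det * ∏ i, A i i :=
    mul_pos hA.inv.det_pos (Finset.prod_pos fun _ _ => hA.diag_pos)
  calc klDiv (gaussMeasure μ (diagonal fun i => (A i i)⁻¹)) (gaussMeasure μ A⁻¹)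
      = 1 / 2 * log (A⁻¹.det * ∏ i, A i i) := hA.klDiv_gaussMeasure_diagonal_inv μ
    _ ≤ 1 / 2 * log ((M / m) ^ d) := by gcongr
    _ = d / 2 * log (M / m) := by rw [log_pow]; ring
end
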